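/- arXiv:1512.04126 — 4 statements merged into one kernel-verified Lean document; each statement's English description precedes it below -/
import Mathlib

section
/- Let v, u₁, u₂ : [0,L] × [−h,0] → ℝ be sufficiently smooth with u₁(0,·) = 0, and let w(v)(x,z) = ∫_{−h}^z ∂_x v(x, z̄) dz̄. Then |∫_0^L ∫_{−h}^0 w(v) ∂_z u₁ u₂ dz dx| ≤ 2 h^{1/2} ‖u₂‖_{L²} ‖∂_x v‖_{L²} ‖∂_z u₁‖_{L²}^{1/2} ‖∂_z u₁‖_{H¹}^{1/2}. -/
open MeasureTheory Real

/-- The partial derivative in the horizontal variable `x`. -/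
noncomputable def pdx (f : ℝ × ℝ → ℝ) (p : ℝ × ℝ) : ℝ := fderiv ℝ f p (1, 0)

/-- The partial derivative in the vertical variable `z`. -/
noncomputable def pdz (f : ℝ × ℝ → ℝ) (p : ℝ × ℝ) : ℝ := fderiv ℝ f p (0, 1)

/-- The `L²` norm over the domain `𝒟 = (0, L) × (-h, 0)`. -/
noncomputable def nL2 (L h : ℝ) (f : ℝ × ℝ → ℝ) : ℝ :=
  Real.sqrt (∫ p in Set.Ioo 0 L ×ˢ Set.Ioo (-h) 0, (f p) ^ 2)

/-- The full `H¹` norm over `𝒟 = (0, L) × (-h, 0)`. -/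
noncomputable def nH1 (L h : ℝ) (f : ℝ × ℝ → ℝ) : ℝ :=
  Real.sqrt ((nL2 L h f) ^ 2 + (nL2 L h (pdx f)) ^ 2 + (nL2 L h (pdz f)) ^ 2)

open Set in
/-- Cauchy–Schwarz for real integrals. -/
lemma aniso_cs {α : Type*} [MeasurableSpace α] (μ : Measure α) (f g : α → ℝ)
    (hf : AEStronglyMeasurable f μ) (hg : AEStronglyMeasurable g μ)
    (hf2 : Integrable (fun a => f a ^ 2) μ) (hg2 : Integrable (fun a => g a ^ 2) μ) :
    ∫ a, |f a| * |g a| ∂μ ≤ Real.sqrt (∫ a, f a ^ 2 ∂μ) * Real.sqrt (∫ a, g a ^ 2 ∂μ) := by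
  have hpq : Real.HolderConjugate 2 2 := Real.HolderConjugate.two_two
  have h2 : (ENNReal.ofReal (2:ℝ)) = 2 := by norm_num
  have hfm : MemLp (fun a => |f a|) (ENNReal.ofReal (2:ℝ)) μ := by
    rw [h2]
    exact (memLp_two_iff_integrable_sq hf.norm).2 (by simpa [sq_abs] using hf2)
  have hgm : MemLp (fun a => |g a|) (ENNReal.ofReal (2:ℝ)) μ := by
    rw [h2]
    exact (memLp_two_iff_integrable_sq hg.norm).2 (by simpa [sq_abs] using hg2)
  have key := integral_mul_le_Lp_mul_Lq_of_nonneg hpq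
    (ae_of_all _ fun a => abs_nonneg (f a)) (ae_of_all _ fun a => abs_nonneg (g a)) hfm hgm
  have e1 : ∀ x : ℝ, |x| ^ (2:ℝ) = x ^ 2 := fun x => by
    rw [show ((2:ℝ)) = ((2:ℕ):ℝ) by norm_num, Real.rpow_natCast]; exact sq_abs x
  simp only [e1] at key
  calc ∫ a, |f a| * |g a| ∂μ
      ≤ (∫ a, f a ^ 2 ∂μ) ^ (1/(2:ℝ)) * (∫ a, g a ^ 2 ∂μ) ^ (1/(2:ℝ)) := key
    _ = Real.sqrt (∫ a, f a ^ 2 ∂μ) * Real.sqrt (∫ a, g a ^ 2 ∂μ) := by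
        rw [Real.sqrt_eq_rpow, Real.sqrt_eq_rpow]

open Set in
lemma aniso_intOn {f : ℝ × ℝ → ℝ} (hf : Continuous f) {a b c d : ℝ} :
    IntegrableOn f (Ioo a b ×ˢ Ioo c d) :=
  (hf.continuousOn.integrableOn_compact (isCompact_Icc.prod isCompact_Icc)).mono_set
    (Set.prod_mono Ioo_subset_Icc_self Ioo_subset_Icc_self)

open Set in
lemma aniso_intOn1 {f : ℝ → ℝ} (hf : Continuous f) {a b : ℝ} {s : Set ℝ}
    (hs : s ⊆ Icc a b) : IntegrableOn f s :=
  (hf.continuousOn.integrableOn_compact isCompact_Icc).mono_set hs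

lemma aniso_contDiff_pd {f : ℝ × ℝ → ℝ} (hf : ContDiff ℝ (⊤ : ℕ∞) f) (w : ℝ × ℝ) :
    ContDiff ℝ (⊤ : ℕ∞) (fun p => fderiv ℝ f p w) :=
  (hf.fderiv_right (by simp)).clm_apply contDiff_const

lemma aniso_hasDerivAt_x {f : ℝ × ℝ → ℝ} (hf : ContDiff ℝ (⊤ : ℕ∞) f) (z s : ℝ) :
    HasDerivAt (fun x => f (x, z)) (pdx f (s, z)) s := by
  have h1 : HasDerivAt (fun x : ℝ => (x, z)) ((1:ℝ), (0:ℝ)) s :=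
    (hasDerivAt_id s).prodMk (hasDerivAt_const s z)
  have h2 : HasFDerivAt f (fderiv ℝ f (s, z)) (s, z) :=
    (hf.differentiable (by simp) (s, z)).hasFDerivAt
  exact h2.comp_hasDerivAt s h1

lemma aniso_pdz_zero {u₁ : ℝ × ℝ → ℝ} (hu₁ : ContDiff ℝ (⊤ : ℕ∞) u₁)
    (hbc : ∀ z : ℝ, u₁ (0, z) = 0) (z : ℝ) : pdz u₁ (0, z) = 0 := by
  have h1 : HasDerivAt (fun t : ℝ => u₁ (0, t)) (pdz u₁ (0, z)) z := by
    have hp : HasDerivAt (fun t : ℝ => ((0:ℝ), t)) ((0:ℝ), (1:ℝ)) z :=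
      (hasDerivAt_const z (0:ℝ)).prodMk (hasDerivAt_id z)
    have h2 : HasFDerivAt u₁ (fderiv ℝ u₁ (0, z)) (0, z) :=
      (hu₁.differentiable (by simp) (0, z)).hasFDerivAt
    exact h2.comp_hasDerivAt z hp
  have h2 : HasDerivAt (fun t : ℝ => u₁ (0, t)) 0 z := by
    have he : (fun t : ℝ => u₁ (0, t)) = fun _ => (0:ℝ) := funext hbc
    rw [he]; exact hasDerivAt_const z 0
  exact h1.unique h2

open Set in
lemma aniso_fubini (L h : ℝ) (F : ℝ × ℝ → ℝ)
    (hF : IntegrableOn F (Ioo 0 L ×ˢ Ioo (-h) 0)) :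
    ∫ p in Ioo 0 L ×ˢ Ioo (-h) 0, F p
      = ∫ x in Ioo 0 L, ∫ z in Ioo (-h) 0, F (x, z) := by
  rw [Measure.volume_eq_prod ℝ ℝ]
  apply setIntegral_prod
  rwa [← Measure.volume_eq_prod]

open Set in
lemma aniso_fubini_symm (L h : ℝ) (F : ℝ × ℝ → ℝ)
    (hF : IntegrableOn F (Ioo 0 L ×ˢ Ioo (-h) 0)) :
    ∫ p in Ioo 0 L ×ˢ Ioo (-h) 0, F p
      = ∫ z in Ioo (-h) 0, ∫ x in Ioo 0 L, F (x, z) := by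
  have hF' : Integrable F (((volume : Measure ℝ).restrict (Ioo 0 L)).prod
      ((volume : Measure ℝ).restrict (Ioo (-h) 0))) := by
    rwa [Measure.prod_restrict, ← Measure.volume_eq_prod]
  calc ∫ p in Ioo 0 L ×ˢ Ioo (-h) 0, F p
      = ∫ p, F p ∂(((volume : Measure ℝ).restrict (Ioo 0 L)).prod
          ((volume : Measure ℝ).restrict (Ioo (-h) 0))) := by
        rw [Measure.prod_restrict, ← Measure.volume_eq_prod]
    _ = ∫ z in Ioo (-h) 0, ∫ x in Ioo 0 L, F (x, z) := integral_prod_symm F hF'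

open Set in
lemma aniso_prod_integrable (L h : ℝ) (F : ℝ × ℝ → ℝ)
    (hF : IntegrableOn F (Ioo 0 L ×ˢ Ioo (-h) 0)) :
    Integrable F (((volume : Measure ℝ).restrict (Ioo 0 L)).prod
      ((volume : Measure ℝ).restrict (Ioo (-h) 0))) := by
  rwa [Measure.prod_restrict, ← Measure.volume_eq_prod]

/-- The anisotropic estimate for the 2D hydrostatic Navier–Stokes equations: with
`w(v)(x,z) = ∫_{-h}^z ∂ₓ v (x, z̄) dz̄`, and `u₁` vanishing on the lateral boundary
`{x = 0}`,
`|∫_𝒟 w(v) ∂_z u₁ u₂| ≤ 2 h^{1/2} ‖u₂‖_{L²} ‖∂ₓ v‖_{L²} ‖∂_z u₁‖_{L²}^{1/2} ‖∂_z u₁‖_{H¹}^{1/2}`. -/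
theorem anisotropic_estimate
    (L h : ℝ) (hL : 0 < L) (hh : 0 < h)
    (v u₁ u₂ : ℝ × ℝ → ℝ)
    (hv : ContDiff ℝ (⊤ : ℕ∞) v) (hu₁ : ContDiff ℝ (⊤ : ℕ∞) u₁) (hu₂ : ContDiff ℝ (⊤ : ℕ∞) u₂)
    (hbc : ∀ z : ℝ, u₁ (0, z) = 0) :
    |∫ p in Set.Ioo 0 L ×ˢ Set.Ioo (-h) 0,
        (∫ z' in (-h)..p.2, pdx v (p.1, z')) * pdz u₁ p * u₂ p| ≤
      2 * Real.sqrt h * nL2 L h u₂ * nL2 L h (pdx v) *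
        Real.sqrt (nL2 L h (pdz u₁)) * Real.sqrt (nH1 L h (pdz u₁)) := by
  classical
  open Set in
  -- notation
  set D : Set (ℝ × ℝ) := Ioo 0 L ×ˢ Ioo (-h) 0 with hD
  have hqCD : ContDiff ℝ (⊤ : ℕ∞) (pdz u₁) := aniso_contDiff_pd hu₁ _
  have hqc : Continuous (pdz u₁) := hqCD.continuous
  have hQc : Continuous (pdx (pdz u₁)) := (aniso_contDiff_pd hqCD _).continuous
  have hVx : Continuous (pdx v) := (aniso_contDiff_pd hv _).continuous
  have hu₂c : Continuous u₂ := hu₂.continuous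
  set W : ℝ × ℝ → ℝ := fun p => ∫ z' in (-h)..p.2, pdx v (p.1, z') with hWdef
  have hWc : Continuous W := by
    have hc : Continuous (Function.uncurry fun (x t : ℝ) => pdx v (x, t)) := by
      exact hVx.comp (continuous_fst.prodMk continuous_snd)
    exact intervalIntegral.continuous_parametric_primitive_of_continuous hc
  -- nonnegativity facts
  have hnL2 : ∀ f : ℝ × ℝ → ℝ, 0 ≤ nL2 L h f := fun f => Real.sqrt_nonneg _
  have hnH1 : 0 ≤ nH1 L h (pdz u₁) := Real.sqrt_nonneg _
  set a : ℝ := nL2 L h (pdz u₁) with ha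
  set b : ℝ := nH1 L h (pdz u₁) with hb
  set c : ℝ := nL2 L h (pdx v) with hc
  set M2 : ℝ := 2 * a * b with hM2def
  -- G x = ∫_z (∂ₓ v)², A x = ∫_z (∂_z u₁)²
  set G : ℝ → ℝ := fun x => ∫ z in Ioo (-h) 0, (pdx v (x, z)) ^ 2 with hGdef
  set A : ℝ → ℝ := fun x => ∫ z in Ioo (-h) 0, (pdz u₁ (x, z)) ^ 2 with hAdef
  have hGnn : ∀ x, 0 ≤ G x := fun x => integral_nonneg fun z => sq_nonneg _
  have hxz : ∀ x : ℝ, Continuous fun z : ℝ => ((x, z) : ℝ × ℝ) :=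
    fun x => continuous_const.prodMk continuous_id
  have hzx : ∀ z : ℝ, Continuous fun x : ℝ => ((x, z) : ℝ × ℝ) :=
    fun z => continuous_id.prodMk continuous_const
  -- Step (2): pointwise bound on W
  have hW2 : ∀ x : ℝ, ∀ z ∈ Ioo (-h) 0, (W (x, z)) ^ 2 ≤ h * G x := by
    intro x z hz
    have habs : |W (x, z)| ≤ Real.sqrt h * Real.sqrt (G x) := by
      have h1 : |W (x, z)| ≤ ∫ t in Ioc (-h) z, |pdx v (x, t)| := by
        rw [hWdef]
        simp only []
        rw [intervalIntegral.integral_of_le hz.1.le]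
        calc |∫ t in Ioc (-h) z, pdx v (x, t)|
            = ‖∫ t in Ioc (-h) z, pdx v (x, t)‖ := (Real.norm_eq_abs _).symm
          _ ≤ ∫ t in Ioc (-h) z, ‖pdx v (x, t)‖ := norm_integral_le_integral_norm _
          _ = ∫ t in Ioc (-h) z, |pdx v (x, t)| := by simp [Real.norm_eq_abs]
      have h2 : ∫ t in Ioc (-h) z, |pdx v (x, t)|
          ≤ ∫ t in Ioo (-h) 0, |pdx v (x, t)| := by
        apply setIntegral_mono_set
        · exact aniso_intOn1 ((hVx.comp (hxz x)).abs) Ioo_subset_Icc_self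
        · exact ae_of_all _ fun t => abs_nonneg _
        · exact HasSubset.Subset.eventuallyLE fun t ht => ⟨ht.1, lt_of_le_of_lt ht.2 hz.2⟩
      have h3 : ∫ t in Ioo (-h) 0, |pdx v (x, t)|
          ≤ Real.sqrt h * Real.sqrt (G x) := by
        have := aniso_cs ((volume : Measure ℝ).restrict (Ioo (-h) 0))
          (fun _ => (1:ℝ)) (fun t => pdx v (x, t))
          aestronglyMeasurable_const (hVx.comp (hxz x)).aestronglyMeasurable
          (integrable_const _) (aniso_intOn1 (((hVx.comp (hxz x)).pow 2)) Ioo_subset_Icc_self)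
        simp only [abs_one, one_mul, one_pow] at this
        have hone : ∫ (_ : ℝ) in Ioo (-h) 0, (1:ℝ) = h := by
          simp [Real.volume_Ioo, hh.le]
        rw [hone] at this
        exact this
      exact (h1.trans h2).trans h3
    calc (W (x, z)) ^ 2 = |W (x, z)| ^ 2 := (sq_abs _).symm
      _ ≤ (Real.sqrt h * Real.sqrt (G x)) ^ 2 := by
          exact pow_le_pow_left₀ (abs_nonneg _) habs 2
      _ = h * G x := by
          rw [mul_pow, Real.sq_sqrt hh.le, Real.sq_sqrt (hGnn x)]
  -- Step (1): A x ≤ M2 on Ioo 0 L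
  have hA_bound : ∀ x ∈ Ioo 0 L, A x ≤ M2 := by
    intro x hx
    -- K z = ∫_s 2|q||Q|
    set T : ℝ × ℝ → ℝ := fun p => 2 * |pdz u₁ p| * |pdx (pdz u₁) p| with hTdef
    have hTc : Continuous T := (continuous_const.mul hqc.abs).mul hQc.abs
    have hTi : IntegrableOn T D := aniso_intOn hTc
    set K : ℝ → ℝ := fun z => ∫ s in Ioo 0 L, T (s, z) with hKdef
    have hKint : Integrable K ((volume : Measure ℝ).restrict (Ioo (-h) 0)) :=
      (aniso_prod_integrable L h T hTi).integral_prod_right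
    -- pointwise FTC bound
    have hptw : ∀ z : ℝ, (pdz u₁ (x, z)) ^ 2 ≤ K z := by
      intro z
      have hderiv : ∀ s ∈ uIcc (0:ℝ) x,
          HasDerivAt (fun s => (pdz u₁ (s, z)) ^ 2)
            (2 * pdz u₁ (s, z) * pdx (pdz u₁) (s, z)) s := by
        intro s _
        have := (aniso_hasDerivAt_x hqCD z s).fun_pow 2
        simpa [mul_comm, mul_assoc, mul_left_comm] using this
      have hcont : Continuous fun s => 2 * pdz u₁ (s, z) * pdx (pdz u₁) (s, z) :=
        (continuous_const.mul (hqc.comp (hzx z))).mul (hQc.comp (hzx z))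
      have hftc : (pdz u₁ (x, z)) ^ 2
          = ∫ s in (0:ℝ)..x, 2 * pdz u₁ (s, z) * pdx (pdz u₁) (s, z) := by
        have := intervalIntegral.integral_eq_sub_of_hasDerivAt hderiv
          (hcont.intervalIntegrable 0 x)
        rw [this, aniso_pdz_zero hu₁ hbc z]
        ring
      rw [hftc, intervalIntegral.integral_of_le hx.1.le]
      calc ∫ s in Ioc 0 x, 2 * pdz u₁ (s, z) * pdx (pdz u₁) (s, z)
          ≤ ∫ s in Ioc 0 x, T (s, z) := by
            apply setIntegral_mono_on
            · exact aniso_intOn1 hcont (Ioc_subset_Icc_self.trans (Icc_subset_Icc le_rfl hx.2.le))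
            · exact aniso_intOn1 (hTc.comp (hzx z))
                (Ioc_subset_Icc_self.trans (Icc_subset_Icc le_rfl hx.2.le))
            · exact measurableSet_Ioc
            · intro s _
              rw [hTdef]
              simp only []
              calc 2 * pdz u₁ (s, z) * pdx (pdz u₁) (s, z)
                  ≤ |2 * pdz u₁ (s, z) * pdx (pdz u₁) (s, z)| := le_abs_self _
                _ = 2 * |pdz u₁ (s, z)| * |pdx (pdz u₁) (s, z)| := by
                    rw [abs_mul, abs_mul]; norm_num
        _ ≤ ∫ s in Ioo 0 L, T (s, z) := by
            apply setIntegral_mono_set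
            · exact aniso_intOn1 (hTc.comp (hzx z)) Ioo_subset_Icc_self
            · exact ae_of_all _ fun s =>
                mul_nonneg (mul_nonneg (by norm_num) (abs_nonneg _)) (abs_nonneg _)
            · exact HasSubset.Subset.eventuallyLE fun s hs => ⟨hs.1, lt_of_le_of_lt hs.2 hx.2⟩
    have hAx : A x ≤ ∫ z in Ioo (-h) 0, K z := by
      rw [hAdef]
      apply integral_mono_of_nonneg
      · exact ae_of_all _ fun z => sq_nonneg _
      · exact hKint
      · exact ae_of_all _ hptw
    have hswap : ∫ z in Ioo (-h) 0, K z = ∫ p in D, T p :=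
      (aniso_fubini_symm L h T hTi).symm
    have hTbd : ∫ p in D, T p ≤ M2 := by
      have h2q : ∫ p in D, T p = 2 * ∫ p in D, |pdz u₁ p| * |pdx (pdz u₁) p| := by
        rw [← integral_const_mul]
        congr 1 with p
        rw [hTdef]; ring
      have hcs := aniso_cs ((volume : Measure (ℝ × ℝ)).restrict D)
        (pdz u₁) (pdx (pdz u₁)) hqc.aestronglyMeasurable hQc.aestronglyMeasurable
        (aniso_intOn (hqc.pow 2)) (aniso_intOn (hQc.pow 2))
      have hQle : Real.sqrt (∫ p in D, (pdx (pdz u₁) p) ^ 2) ≤ b := by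
        rw [hb]
        have h1 : Real.sqrt (∫ p in D, (pdx (pdz u₁) p) ^ 2) = nL2 L h (pdx (pdz u₁)) := rfl
        rw [h1, nH1]
        exact Real.le_sqrt_of_sq_le (by
          nlinarith [sq_nonneg (nL2 L h (pdz u₁)), sq_nonneg (nL2 L h (pdz (pdz u₁)))])
      have haeq : Real.sqrt (∫ p in D, (pdz u₁ p) ^ 2) = a := rfl
      calc ∫ p in D, T p = 2 * ∫ p in D, |pdz u₁ p| * |pdx (pdz u₁) p| := h2q
        _ ≤ 2 * (Real.sqrt (∫ p in D, (pdz u₁ p) ^ 2)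
              * Real.sqrt (∫ p in D, (pdx (pdz u₁) p) ^ 2)) := by linarith [hcs]
        _ ≤ 2 * (a * b) := by
            rw [haeq]
            exact mul_le_mul_of_nonneg_left
              (mul_le_mul_of_nonneg_left hQle (hnL2 _)) (by norm_num)
        _ = M2 := by rw [hM2def]; ring
    calc A x ≤ ∫ z in Ioo (-h) 0, K z := hAx
      _ = ∫ p in D, T p := hswap
      _ ≤ M2 := hTbd
  have hM2nn : 0 ≤ M2 := by
    rw [hM2def]
    exact mul_nonneg (mul_nonneg (by norm_num) (hnL2 _)) hnH1
  -- Step (3): main chain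
  have hWq2i : IntegrableOn (fun p => (W p * pdz u₁ p) ^ 2) D :=
    aniso_intOn (((hWc.mul hqc).pow 2))
  have hKey : ∫ p in D, (W p * pdz u₁ p) ^ 2 ≤ h * M2 * c ^ 2 := by
    have hfub : ∫ p in D, (W p * pdz u₁ p) ^ 2
        = ∫ x in Ioo 0 L, ∫ z in Ioo (-h) 0, (W (x, z) * pdz u₁ (x, z)) ^ 2 :=
      aniso_fubini L h _ hWq2i
    have hGi : Integrable (fun x => h * M2 * G x)
        ((volume : Measure ℝ).restrict (Ioo 0 L)) := by
      have : Integrable G ((volume : Measure ℝ).restrict (Ioo 0 L)) :=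
        (aniso_prod_integrable L h (fun p => (pdx v p) ^ 2)
          (aniso_intOn (hVx.pow 2))).integral_prod_left
      exact this.const_mul _
    have hinner : ∀ x ∈ Ioo 0 L,
        (∫ z in Ioo (-h) 0, (W (x, z) * pdz u₁ (x, z)) ^ 2) ≤ h * M2 * G x := by
      intro x hx
      have hmono : (∫ z in Ioo (-h) 0, (W (x, z) * pdz u₁ (x, z)) ^ 2)
          ≤ ∫ z in Ioo (-h) 0, (h * G x) * (pdz u₁ (x, z)) ^ 2 := by
        apply setIntegral_mono_on
        · exact aniso_intOn1 (((hWc.comp (hxz x)).mul (hqc.comp (hxz x))).pow 2)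
            Ioo_subset_Icc_self
        · exact (aniso_intOn1 ((hqc.comp (hxz x)).pow 2) Ioo_subset_Icc_self).const_mul _
        · exact measurableSet_Ioo
        · intro z hz
          calc (W (x, z) * pdz u₁ (x, z)) ^ 2
              = (W (x, z)) ^ 2 * (pdz u₁ (x, z)) ^ 2 := by ring
            _ ≤ (h * G x) * (pdz u₁ (x, z)) ^ 2 :=
                mul_le_mul_of_nonneg_right (hW2 x z hz) (sq_nonneg _)
      have heval : ∫ z in Ioo (-h) 0, (h * G x) * (pdz u₁ (x, z)) ^ 2
          = (h * G x) * A x := integral_const_mul _ _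
      have hfin : (h * G x) * A x ≤ h * M2 * G x := by
        have h1 := mul_le_mul_of_nonneg_left (hA_bound x hx)
          (mul_nonneg hh.le (hGnn x))
        calc (h * G x) * A x = h * G x * A x := by ring
          _ ≤ h * G x * M2 := h1
          _ = h * M2 * G x := by ring
      calc (∫ z in Ioo (-h) 0, (W (x, z) * pdz u₁ (x, z)) ^ 2)
          ≤ ∫ z in Ioo (-h) 0, (h * G x) * (pdz u₁ (x, z)) ^ 2 := hmono
        _ = (h * G x) * A x := heval
        _ ≤ h * M2 * G x := hfin
    have houter : (∫ x in Ioo 0 L, ∫ z in Ioo (-h) 0, (W (x, z) * pdz u₁ (x, z)) ^ 2)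
        ≤ ∫ x in Ioo 0 L, h * M2 * G x := by
      apply integral_mono_of_nonneg
      · exact ae_of_all _ fun x => integral_nonneg fun z => sq_nonneg _
      · exact hGi
      · filter_upwards [ae_restrict_mem measurableSet_Ioo] with x hx
        exact hinner x hx
    have hGint : ∫ x in Ioo 0 L, G x = c ^ 2 := by
      rw [hc, nL2, Real.sq_sqrt (integral_nonneg fun p => sq_nonneg _)]
      exact (aniso_fubini L h (fun p => (pdx v p) ^ 2) (aniso_intOn (hVx.pow 2))).symm
    calc ∫ p in D, (W p * pdz u₁ p) ^ 2
        = ∫ x in Ioo 0 L, ∫ z in Ioo (-h) 0, (W (x, z) * pdz u₁ (x, z)) ^ 2 := hfub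
      _ ≤ ∫ x in Ioo 0 L, h * M2 * G x := houter
      _ = h * M2 * ∫ x in Ioo 0 L, G x := integral_const_mul _ _
      _ = h * M2 * c ^ 2 := by rw [hGint]
  -- combine
  have hmain : |∫ p in D, W p * pdz u₁ p * u₂ p|
      ≤ Real.sqrt (∫ p in D, (W p * pdz u₁ p) ^ 2) * nL2 L h u₂ := by
    have h1 : |∫ p in D, W p * pdz u₁ p * u₂ p|
        ≤ ∫ p in D, |W p * pdz u₁ p| * |u₂ p| := by
      calc |∫ p in D, W p * pdz u₁ p * u₂ p|
          = ‖∫ p in D, W p * pdz u₁ p * u₂ p‖ := (Real.norm_eq_abs _).symm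
        _ ≤ ∫ p in D, ‖W p * pdz u₁ p * u₂ p‖ := norm_integral_le_integral_norm _
        _ = ∫ p in D, |W p * pdz u₁ p| * |u₂ p| := by
            congr 1 with p
            rw [Real.norm_eq_abs, abs_mul]
    have h2 := aniso_cs ((volume : Measure (ℝ × ℝ)).restrict D)
      (fun p => W p * pdz u₁ p) u₂
      (hWc.mul hqc).aestronglyMeasurable hu₂c.aestronglyMeasurable
      hWq2i (aniso_intOn (hu₂c.pow 2))
    exact h1.trans h2
  have hsq : Real.sqrt (∫ p in D, (W p * pdz u₁ p) ^ 2)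
      ≤ Real.sqrt 2 * Real.sqrt h * Real.sqrt a * Real.sqrt b * c := by
    have h1 : Real.sqrt (∫ p in D, (W p * pdz u₁ p) ^ 2)
        ≤ Real.sqrt (h * M2 * c ^ 2) := Real.sqrt_le_sqrt hKey
    have h2 : h * M2 * c ^ 2
        = (Real.sqrt 2 * Real.sqrt h * Real.sqrt a * Real.sqrt b * c) ^ 2 := by
      have hann : 0 ≤ a := hnL2 _
      have hcnn : 0 ≤ c := hnL2 _
      rw [hM2def]
      have e2 : Real.sqrt 2 ^ 2 = 2 := Real.sq_sqrt (by norm_num)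
      have eh : Real.sqrt h ^ 2 = h := Real.sq_sqrt hh.le
      have ea : Real.sqrt a ^ 2 = a := Real.sq_sqrt hann
      have eb : Real.sqrt b ^ 2 = b := Real.sq_sqrt hnH1
      rw [show (Real.sqrt 2 * Real.sqrt h * Real.sqrt a * Real.sqrt b * c) ^ 2
          = (Real.sqrt 2 ^ 2) * (Real.sqrt h ^ 2) * (Real.sqrt a ^ 2)
            * (Real.sqrt b ^ 2) * c ^ 2 by ring, e2, eh, ea, eb]
      ring
    rw [h2, Real.sqrt_sq (mul_nonneg (mul_nonneg (mul_nonneg (mul_nonneg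
      (Real.sqrt_nonneg 2) (Real.sqrt_nonneg h)) (Real.sqrt_nonneg a))
      (Real.sqrt_nonneg b)) (hnL2 _))] at h1
    exact h1
  have hsqrt2 : Real.sqrt 2 ≤ 2 := by
    nlinarith [Real.sq_sqrt (by norm_num : (0:ℝ) ≤ 2), Real.sqrt_nonneg 2]
  have hgoal : |∫ p in D, W p * pdz u₁ p * u₂ p|
      ≤ 2 * Real.sqrt h * nL2 L h u₂ * c * Real.sqrt a * Real.sqrt b := by
    have hstep : Real.sqrt (∫ p in D, (W p * pdz u₁ p) ^ 2) * nL2 L h u₂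
        ≤ (Real.sqrt 2 * Real.sqrt h * Real.sqrt a * Real.sqrt b * c) * nL2 L h u₂ :=
      mul_le_mul_of_nonneg_right hsq (hnL2 _)
    have hP : (Real.sqrt 2 * Real.sqrt h * Real.sqrt a * Real.sqrt b * c) * nL2 L h u₂
        ≤ 2 * Real.sqrt h * nL2 L h u₂ * c * Real.sqrt a * Real.sqrt b := by
      have hPnn : 0 ≤ Real.sqrt h * Real.sqrt a * Real.sqrt b * c * nL2 L h u₂ :=
        mul_nonneg (mul_nonneg (mul_nonneg (mul_nonneg (Real.sqrt_nonneg h)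
          (Real.sqrt_nonneg a)) (Real.sqrt_nonneg b)) (hnL2 _)) (hnL2 _)
      calc (Real.sqrt 2 * Real.sqrt h * Real.sqrt a * Real.sqrt b * c) * nL2 L h u₂
          = Real.sqrt 2 * (Real.sqrt h * Real.sqrt a * Real.sqrt b * c * nL2 L h u₂) := by
            ring
        _ ≤ 2 * (Real.sqrt h * Real.sqrt a * Real.sqrt b * c * nL2 L h u₂) :=
            mul_le_mul_of_nonneg_right hsqrt2 hPnn
        _ = 2 * Real.sqrt h * nL2 L h u₂ * c * Real.sqrt a * Real.sqrt b := by ring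
    exact (hmain.trans hstep).trans hP
  exact hgoal
end

section
/- Let u be a smooth function on 𝒟 = (0,L) × (−h,0) with u = 0 on the lateral boundary {0,L} × [−h,0] and ∂_z u = 0 on the top and bottom [0,L] × {0,−h}, and define w(x,z) = −∫_{−h}^z ∂_x u(x,z̄) dz̄. Then the vorticity-form nonlinear term exactly cancels: ∫_𝒟 ∂_z( u ∂_x u + w ∂_z u ) ∂_z u dx dz = 0. -/
open MeasureTheory

section Aux

open intervalIntegral Set

/-- A section in the `x` direction of a jointly differentiable function. -/
lemma hasDerivAt_sectx {f : ℝ × ℝ → ℝ} {D : ℝ × ℝ →L[ℝ] ℝ} {x z : ℝ}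
    (hf : HasFDerivAt f D (x, z)) :
    HasDerivAt (fun x' => f (x', z)) (D (1, 0)) x :=
  hf.comp_hasDerivAt x (HasDerivAt.prodMk (hasDerivAt_id x) (hasDerivAt_const x z))

/-- A section in the `z` direction of a jointly differentiable function. -/
lemma hasDerivAt_sectz {f : ℝ × ℝ → ℝ} {D : ℝ × ℝ →L[ℝ] ℝ} {x z : ℝ}
    (hf : HasFDerivAt f D (x, z)) :
    HasDerivAt (fun z' => f (x, z')) (D (0, 1)) z :=
  hf.comp_hasDerivAt z (HasDerivAt.prodMk (hasDerivAt_const z x) (hasDerivAt_id z))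

/-- Joint differentiability of a parametric interval integral with variable upper
endpoint, with explicit value of the vertical partial derivative. -/
lemma hasFDerivAt_param_integral (g : ℝ × ℝ → ℝ) (hg : ContDiff ℝ (⊤ : ℕ∞) g) (c : ℝ)
    (p : ℝ × ℝ) :
    ∃ D : ℝ × ℝ →L[ℝ] ℝ,
      HasFDerivAt (fun q : ℝ × ℝ => ∫ t in c..q.2, g (q.1, t)) D p ∧ D (0, 1) = g p := by
  have hgc : Continuous g := hg.continuous
  have hgd : Differentiable ℝ g := hg.differentiable (by simp)
  -- the `x`-partial derivative of `g`
  set gx : ℝ × ℝ → ℝ := fun q => fderiv ℝ g q (1, 0) with hgx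
  have hgxc : Continuous gx := ((hg.fderiv_right (m := (⊤ : ℕ∞)) (by simp)).clm_apply contDiff_const).continuous
  -- Part 1: the fixed-endpoint integral, differentiable in the parameter
  have hcont : ∀ (x : ℝ), Continuous fun t => g (x, t) := fun x =>
    hgc.comp (continuous_const.prodMk continuous_id)
  obtain ⟨C, hC⟩ : ∃ C, ∀ q ∈ Set.Icc (p.1 - 1) (p.1 + 1) ×ˢ Set.uIcc c p.2, ‖gx q‖ ≤ C :=
    (isCompact_Icc.prod isCompact_uIcc).exists_bound_of_continuousOn hgxc.continuousOn
  have h1 : HasDerivAt (fun x => ∫ t in c..p.2, g (x, t))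
      (∫ t in c..p.2, gx (p.1, t)) p.1 := by
    refine (intervalIntegral.hasDerivAt_integral_of_dominated_loc_of_deriv_le
      (F := fun x t => g (x, t)) (F' := fun x t => gx (x, t)) (bound := fun _ => C)
      (Metric.ball_mem_nhds p.1 one_pos) ?_ ?_ ?_ ?_ ?_ ?_).2
    · exact Filter.Eventually.of_forall fun x => (hcont x).aestronglyMeasurable
    · exact (hcont p.1).intervalIntegrable _ _
    · exact (hgxc.comp (continuous_const.prodMk continuous_id)).aestronglyMeasurable
    · refine Filter.Eventually.of_forall fun t ht x hx => hC (x, t) ?_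
      refine ⟨?_, Set.uIoc_subset_uIcc ht⟩
      have := Metric.mem_ball.1 hx
      rw [Real.dist_eq] at this
      constructor <;> [skip; skip] <;> cases' abs_lt.1 this with h h <;> simp <;> linarith
    · exact intervalIntegrable_const
    · refine Filter.Eventually.of_forall fun t ht x hx => ?_
      exact hasDerivAt_sectx (hgd (x, t)).hasFDerivAt
  -- Part 2: the varying-endpoint piece, jointly differentiable at `p`
  set Φ : ℝ × ℝ → ℝ := fun q => ∫ t in p.2..q.2, g (q.1, t) with hΦ
  have h2 : HasFDerivAt Φ (g p • ContinuousLinearMap.snd ℝ ℝ ℝ) p := by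
    rw [hasFDerivAt_iff_isLittleO_nhds_zero]
    rw [Asymptotics.isLittleO_iff]
    intro ε hε
    obtain ⟨δ, hδpos, hδ⟩ := Metric.continuousAt_iff.1 hgc.continuousAt (ε := ε) hε
    filter_upwards [Metric.ball_mem_nhds (0 : ℝ × ℝ) hδpos] with v hv
    have hvn : max |v.1| |v.2| < δ := by
      simpa [Prod.norm_def, Real.norm_eq_abs] using hv
    have hv1 : |v.1| < δ := (le_max_left _ _).trans_lt hvn
    have hv2 : |v.2| < δ := (le_max_right _ _).trans_lt hvn
    have key : ∀ t ∈ Set.uIoc p.2 (p.2 + v.2), ‖g (p.1 + v.1, t) - g p‖ ≤ ε := by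
      intro t ht
      have ht' : t ∈ Set.uIcc p.2 (p.2 + v.2) := Set.uIoc_subset_uIcc ht
      have h3 : |t - p.2| ≤ |v.2| := by
        rcases Set.mem_uIcc.1 ht' with ⟨h4, h5⟩ | ⟨h4, h5⟩ <;> rw [abs_le] <;>
          constructor <;> linarith [abs_nonneg v.2, le_abs_self v.2, neg_abs_le v.2]
      have : dist (p.1 + v.1, t) p < δ := by
        rw [Prod.dist_eq]
        refine max_lt ?_ (lt_of_le_of_lt ?_ hv2)
        · simpa [Real.dist_eq] using hv1
        · simpa [Real.dist_eq] using h3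
      exact le_of_lt (hδ this)
    have hΦv : Φ (p + v) - g p * v.2 =
        ∫ t in p.2..(p.2 + v.2), (g (p.1 + v.1, t) - g p) := by
      rw [intervalIntegral.integral_sub ((hcont _).intervalIntegrable _ _)
        intervalIntegrable_const, intervalIntegral.integral_const]
      simp [hΦ]
      ring
    have hb := intervalIntegral.norm_integral_le_of_norm_le_const key
    calc ‖Φ (p + v) - Φ p - (g p • ContinuousLinearMap.snd ℝ ℝ ℝ) v‖
        = ‖Φ (p + v) - g p * v.2‖ := by simp [hΦ, smul_eq_mul]
      _ ≤ ε * |p.2 + v.2 - p.2| := by rw [hΦv]; exact hb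
      _ ≤ ε * ‖v‖ := by
          rw [add_sub_cancel_left]
          have h9 : |v.2| ≤ ‖v‖ := by
            simpa [Real.norm_eq_abs] using norm_snd_le v
          exact mul_le_mul_of_nonneg_left h9 hε.le
  -- combine
  have hsplit : (fun q : ℝ × ℝ => ∫ t in c..q.2, g (q.1, t)) =
      fun q => (∫ t in c..p.2, g (q.1, t)) + Φ q := by
    funext q
    rw [hΦ]
    exact (intervalIntegral.integral_add_adjacent_intervals
      ((hcont q.1).intervalIntegrable _ _) ((hcont q.1).intervalIntegrable _ _)).symm
  have h1' : HasFDerivAt (fun q : ℝ × ℝ => ∫ t in c..p.2, g (q.1, t))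
      ((ContinuousLinearMap.smulRight (1 : ℝ →L[ℝ] ℝ) (∫ t in c..p.2, gx (p.1, t))).comp
        (ContinuousLinearMap.fst ℝ ℝ ℝ)) p :=
    h1.hasFDerivAt.comp p (hasFDerivAt_fst)
  refine ⟨_, by rw [hsplit]; exact h1'.add h2, ?_⟩
  simp

end Aux

/-- Exact cancellation of the vorticity-form nonlinear term for the hydrostatic
Navier–Stokes equations: for smooth `u` on `𝒟 = (0,L) × (-h,0)` with `u = 0` on the
lateral boundary and `∂_z u = 0` on the top and bottom, and with the diagnostic vertical
velocity `w(x,z) = -∫_{-h}^z ∂ₓ u (x, z̄) dz̄`,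
`∫_𝒟 ∂_z (u ∂ₓ u + w ∂_z u) ∂_z u = 0`. -/
theorem vorticity_form_cancellation
    (L h : ℝ) (hL : 0 < L) (hh : 0 < h)
    (u : ℝ × ℝ → ℝ) (hu : ContDiff ℝ (⊤ : ℕ∞) u)
    (hlat : ∀ z ∈ Set.Icc (-h) 0, u (0, z) = 0 ∧ u (L, z) = 0)
    (htb : ∀ x ∈ Set.Icc 0 L, pdz u (x, 0) = 0 ∧ pdz u (x, -h) = 0) :
    (∫ p in Set.Ioo 0 L ×ˢ Set.Ioo (-h) 0,
      pdz (fun q => u q * pdx u q +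
          (-(∫ z' in (-h)..q.2, pdx u (q.1, z'))) * pdz u q) p * pdz u p) = 0 := by
  have hud : Differentiable ℝ u := hu.differentiable (by simp)
  have hux : ContDiff ℝ (⊤ : ℕ∞) (pdx u) := (hu.fderiv_right (m := (⊤ : ℕ∞)) (by simp)).clm_apply contDiff_const
  have huz : ContDiff ℝ (⊤ : ℕ∞) (pdz u) := (hu.fderiv_right (m := (⊤ : ℕ∞)) (by simp)).clm_apply contDiff_const
  have huxd : Differentiable ℝ (pdx u) := hux.differentiable (by simp)
  have huzd : Differentiable ℝ (pdz u) := huz.differentiable (by simp)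
  have huxz : ContDiff ℝ (⊤ : ℕ∞) (pdz (pdx u)) :=
    (hux.fderiv_right (m := (⊤ : ℕ∞)) (by simp)).clm_apply contDiff_const
  have huzz : ContDiff ℝ (⊤ : ℕ∞) (pdz (pdz u)) :=
    (huz.fderiv_right (m := (⊤ : ℕ∞)) (by simp)).clm_apply contDiff_const
  -- symmetry of second derivatives
  have hsymm : ∀ p : ℝ × ℝ, pdx (pdz u) p = pdz (pdx u) p := by
    intro p
    have hf'd : Differentiable ℝ (fderiv ℝ u) :=
      (hu.fderiv_right (m := (⊤ : ℕ∞)) (by simp)).differentiable (by simp)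
    have hsec := second_derivative_symmetric (f := u)
      (fun y => (hud y).hasFDerivAt) (hf'd p).hasFDerivAt ((1:ℝ), (0:ℝ)) ((0:ℝ), (1:ℝ))
    have e1 : HasFDerivAt (pdz u)
        ((ContinuousLinearMap.apply ℝ ℝ ((0:ℝ), (1:ℝ))).comp (fderiv ℝ (fderiv ℝ u) p)) p :=
      (ContinuousLinearMap.apply ℝ ℝ ((0:ℝ), (1:ℝ))).hasFDerivAt.comp p (hf'd p).hasFDerivAt
    have e2 : HasFDerivAt (pdx u)
        ((ContinuousLinearMap.apply ℝ ℝ ((1:ℝ), (0:ℝ))).comp (fderiv ℝ (fderiv ℝ u) p)) p :=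
      (ContinuousLinearMap.apply ℝ ℝ ((1:ℝ), (0:ℝ))).hasFDerivAt.comp p (hf'd p).hasFDerivAt
    rw [pdx, pdz, e1.fderiv, e2.fderiv]
    simpa using hsec
  -- the stream-type integral and its derivative
  have hWD : ∀ p : ℝ × ℝ, ∃ D : ℝ × ℝ →L[ℝ] ℝ,
      HasFDerivAt (fun q : ℝ × ℝ => ∫ t in (-h)..q.2, pdx u (q.1, t)) D p ∧
        D (0, 1) = pdx u p :=
    hasFDerivAt_param_integral (pdx u) hux (-h)
  choose DW hDW hDW1 using hWD
  set W : ℝ × ℝ → ℝ := fun q : ℝ × ℝ => ∫ t in (-h)..q.2, pdx u (q.1, t) with hW_def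
  have hWdiff : Differentiable ℝ W := fun p => (hDW p).differentiableAt
  have hWc : Continuous W := hWdiff.continuous
  -- the two potentials
  set A : ℝ × ℝ → ℝ := fun q => u q * (pdz u q * pdz u q) with hA_def
  set B : ℝ × ℝ → ℝ := fun q => -W q * (pdz u q * pdz u q) with hB_def
  have hA' : ∀ p : ℝ × ℝ, HasFDerivAt A
      (u p • (pdz u p • fderiv ℝ (pdz u) p + pdz u p • fderiv ℝ (pdz u) p) +
        (pdz u p * pdz u p) • fderiv ℝ u p) p :=
    fun p => (hud p).hasFDerivAt.mul ((huzd p).hasFDerivAt.mul (huzd p).hasFDerivAt)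
  have hB' : ∀ p : ℝ × ℝ, HasFDerivAt B
      ((-W p) • (pdz u p • fderiv ℝ (pdz u) p + pdz u p • fderiv ℝ (pdz u) p) +
        (pdz u p * pdz u p) • (-DW p)) p :=
    fun p => (hDW p).neg.mul ((huzd p).hasFDerivAt.mul (huzd p).hasFDerivAt)
  -- explicit formulas for the relevant partial derivatives
  have hApdx : ∀ p : ℝ × ℝ, pdx A p =
      pdx u p * (pdz u p * pdz u p) + 2 * (u p * (pdz u p * pdz (pdx u) p)) := by
    intro p
    have h2 : fderiv ℝ (pdz u) p (1, 0) = pdz (pdx u) p := hsymm p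
    rw [pdx, (hA' p).fderiv]
    simp only [ContinuousLinearMap.add_apply, ContinuousLinearMap.smul_apply, smul_eq_mul, h2,
      pdx, pdz]
    ring
  have hBpdz : ∀ p : ℝ × ℝ, pdz B p =
      -(pdx u p) * (pdz u p * pdz u p) + 2 * (-W p * (pdz u p * pdz (pdz u) p)) := by
    intro p
    rw [pdz, (hB' p).fderiv]
    simp only [ContinuousLinearMap.add_apply, ContinuousLinearMap.smul_apply,
      ContinuousLinearMap.neg_apply, smul_eq_mul, hDW1 p, pdx, pdz]
    ring
  have hFpdz : ∀ p : ℝ × ℝ, pdz (fun q => u q * pdx u q +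
      (-(∫ z' in (-h)..q.2, pdx u (q.1, z'))) * pdz u q) p =
      u p * pdz (pdx u) p + -W p * pdz (pdz u) p := by
    intro p
    have hF' : HasFDerivAt (fun q => u q * pdx u q +
        (-(∫ z' in (-h)..q.2, pdx u (q.1, z'))) * pdz u q)
        ((u p • fderiv ℝ (pdx u) p + pdx u p • fderiv ℝ u p) +
          ((-W p) • fderiv ℝ (pdz u) p + pdz u p • (-DW p))) p :=
      ((hud p).hasFDerivAt.mul (huxd p).hasFDerivAt).add
        ((hDW p).neg.mul ((huzd p).hasFDerivAt))
    rw [pdz, hF'.fderiv]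
    simp only [ContinuousLinearMap.add_apply, ContinuousLinearMap.smul_apply,
      ContinuousLinearMap.neg_apply, smul_eq_mul, hDW1 p, pdx, pdz]
    ring
  -- the pointwise identity
  have hmain : ∀ p : ℝ × ℝ, pdz (fun q => u q * pdx u q +
      (-(∫ z' in (-h)..q.2, pdx u (q.1, z'))) * pdz u q) p * pdz u p =
      (pdx A p + pdz B p) / 2 := by
    intro p
    rw [hFpdz p, hApdx p, hBpdz p]
    ring
  -- continuity of the two derivative fields
  have hcontA : Continuous (fun p => pdx A p) := by
    have : (fun p => pdx A p) = fun p =>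
        pdx u p * (pdz u p * pdz u p) + 2 * (u p * (pdz u p * pdz (pdx u) p)) :=
      funext hApdx
    rw [this]
    exact (hux.continuous.mul (huz.continuous.mul huz.continuous)).add
      (continuous_const.mul (hu.continuous.mul (huz.continuous.mul huxz.continuous)))
  have hcontB : Continuous (fun p => pdz B p) := by
    have : (fun p => pdz B p) = fun p =>
        -(pdx u p) * (pdz u p * pdz u p) + 2 * (-W p * (pdz u p * pdz (pdz u) p)) :=
      funext hBpdz
    rw [this]
    exact (hux.continuous.neg.mul (huz.continuous.mul huz.continuous)).add
      (continuous_const.mul ((hWc.neg).mul (huz.continuous.mul huzz.continuous)))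
  -- integrability on the rectangle
  have hsub : Set.Ioo 0 L ×ˢ Set.Ioo (-h) 0 ⊆ Set.Icc ((0:ℝ), -h) ((L:ℝ), 0) := by
    rw [← Set.Icc_prod_Icc]
    exact Set.prod_mono Set.Ioo_subset_Icc_self Set.Ioo_subset_Icc_self
  have hIntA : IntegrableOn (fun p => pdx A p) (Set.Ioo 0 L ×ˢ Set.Ioo (-h) 0) volume :=
    (hcontA.continuousOn.integrableOn_compact isCompact_Icc).mono_set hsub
  have hIntB : IntegrableOn (fun p => pdz B p) (Set.Ioo 0 L ×ˢ Set.Ioo (-h) 0) volume :=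
    (hcontB.continuousOn.integrableOn_compact isCompact_Icc).mono_set hsub
  -- the A-term vanishes: integrate first in x
  have hinnerA : ∀ z ∈ Set.Ioo (-h) (0:ℝ), (∫ x in Set.Ioo 0 L, pdx A (x, z)) = 0 := by
    intro z hz
    have hz' : z ∈ Set.Icc (-h) 0 := ⟨hz.1.le, hz.2.le⟩
    have hftc : ∫ x in (0:ℝ)..L, pdx A (x, z) = A (L, z) - A (0, z) := by
      refine intervalIntegral.integral_eq_sub_of_hasDerivAt (f := fun x => A (x, z)) (fun x _ => ?_) ?_
      · rw [pdx, (hA' (x, z)).fderiv]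
        exact hasDerivAt_sectx (hA' (x, z))
      · exact (hcontA.comp (continuous_id.prodMk continuous_const)).intervalIntegrable _ _
    rw [← MeasureTheory.integral_Ioc_eq_integral_Ioo, ← intervalIntegral.integral_of_le hL.le,
      hftc, hA_def]
    simp [(hlat z hz').1, (hlat z hz').2]
  have hinnerB : ∀ x ∈ Set.Ioo (0:ℝ) L, (∫ z in Set.Ioo (-h) 0, pdz B (x, z)) = 0 := by
    intro x hx
    have hx' : x ∈ Set.Icc 0 L := ⟨hx.1.le, hx.2.le⟩
    have hftc : ∫ z in (-h:ℝ)..0, pdz B (x, z) = B (x, 0) - B (x, -h) := by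
      refine intervalIntegral.integral_eq_sub_of_hasDerivAt (f := fun z => B (x, z)) (fun z _ => ?_) ?_
      · rw [pdz, (hB' (x, z)).fderiv]
        exact hasDerivAt_sectz (hB' (x, z))
      · exact (hcontB.comp (continuous_const.prodMk continuous_id)).intervalIntegrable _ _
    rw [← MeasureTheory.integral_Ioc_eq_integral_Ioo,
      ← intervalIntegral.integral_of_le (by linarith : (-h:ℝ) ≤ 0), hftc, hB_def]
    simp [(htb x hx').1, (htb x hx').2]
  -- Fubini for the two pieces
  have hfubA : (∫ p in Set.Ioo 0 L ×ˢ Set.Ioo (-h) 0, pdx A p) =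
      ∫ z in Set.Ioo (-h) (0:ℝ), ∫ x in Set.Ioo 0 L, pdx A (x, z) := by
    rw [Measure.volume_eq_prod, ← Measure.prod_restrict]
    refine MeasureTheory.integral_prod_symm _ ?_
    rw [Measure.prod_restrict, ← Measure.volume_eq_prod]
    exact hIntA
  have hfubB : (∫ p in Set.Ioo 0 L ×ˢ Set.Ioo (-h) 0, pdz B p) =
      ∫ x in Set.Ioo (0:ℝ) L, ∫ z in Set.Ioo (-h) 0, pdz B (x, z) := by
    rw [Measure.volume_eq_prod, ← Measure.prod_restrict]
    refine MeasureTheory.integral_prod _ ?_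
    rw [Measure.prod_restrict, ← Measure.volume_eq_prod]
    exact hIntB
  have hA0 : (∫ p in Set.Ioo 0 L ×ˢ Set.Ioo (-h) 0, pdx A p) = 0 := by
    rw [hfubA]
    exact setIntegral_eq_zero_of_forall_eq_zero hinnerA
  have hB0 : (∫ p in Set.Ioo 0 L ×ˢ Set.Ioo (-h) 0, pdz B p) = 0 := by
    rw [hfubB]
    exact setIntegral_eq_zero_of_forall_eq_zero hinnerB
  -- put everything together
  calc (∫ p in Set.Ioo 0 L ×ˢ Set.Ioo (-h) 0,
        pdz (fun q => u q * pdx u q +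
          (-(∫ z' in (-h)..q.2, pdx u (q.1, z'))) * pdz u q) p * pdz u p)
      = ∫ p in Set.Ioo 0 L ×ˢ Set.Ioo (-h) 0, (pdx A p + pdz B p) / 2 := by
        simp only [hmain]
    _ = (∫ p in Set.Ioo 0 L ×ˢ Set.Ioo (-h) 0, (pdx A p + pdz B p)) / 2 := by
        rw [integral_div]
    _ = ((∫ p in Set.Ioo 0 L ×ˢ Set.Ioo (-h) 0, pdx A p) +
          (∫ p in Set.Ioo 0 L ×ˢ Set.Ioo (-h) 0, pdz B p)) / 2 := by
        rw [MeasureTheory.integral_add hIntA hIntB]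
    _ = 0 := by rw [hA0, hB0]; norm_num
end

section
/- In the setting of the previous approximation lemma, if additionally each μ^ε is an invariant measure for P^ε (i.e., μ^ε P^ε = μ^ε), then the weak limit μ is an invariant measure for P: μP = μ. -/
/-!
Fix a bounded Lipschitz `φ`. Invariance gives `∫ φ dμ^ε = ∫ P^ε φ dμ^ε`. The uniform
`ψ(‖·‖_V)`-moments keep all but an arbitrarily small mass of every `μ^ε` inside one `V`-ball, on
which `P^ε φ → P φ` uniformly, so `∫ (P^ε φ - P φ) dμ^ε → 0`. Since `P φ` is bounded and continuous
(Feller), `∫ P φ dμ^ε → ∫ P φ dμ = ∫ φ d(μP)` along the subsequence, whence `∫ φ d(μP) = ∫ φ dμ`.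
Bounded Lipschitz functions determine a finite Borel measure on a metric space: thickened
indicators of a closed set are Lipschitz and decrease to its indicator.
-/

open MeasureTheory ProbabilityTheory Filter ENNReal Topology

/-- Extension of an increasing continuous `ψ : [0,∞) → [0,∞)` to `[0,∞]` with `ψ(∞) = ∞`. -/
noncomputable def extPsi (ψ : ℝ → ℝ) : ENNReal → ENNReal :=
  fun x => if x = ⊤ then ⊤ else ENNReal.ofReal (ψ x.toReal)

namespace MeasureTheory

variable {α β : Type*} [MeasurableSpace α] [MeasurableSpace β]

lemma Measure.integral_bind_kernel {E : Type*} [NormedAddCommGroup E] [NormedSpace ℝ E]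
    {μ : Measure α} {κ : Kernel α β} {f : β → E} (hf : Integrable f (μ.bind κ)) :
    ∫ y, f y ∂(μ.bind κ) = ∫ x, ∫ y, f y ∂(κ x) ∂μ := by
  rw [Measure.comp_eq_comp_const_apply] at hf ⊢
  exact Kernel.integral_comp hf

lemma abs_integral_le_of_forall_abs_le {μ : Measure α} [IsProbabilityMeasure μ] {f : α → ℝ}
    {C : ℝ} (hC : ∀ x, |f x| ≤ C) : |∫ x, f x ∂μ| ≤ C := by
  simpa using norm_integral_le_of_norm_le_const (μ := μ) (f := f) (ae_of_all _ hC)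

lemma integrable_integral_kernel {μ : Measure α} [IsFiniteMeasure μ] {κ : Kernel α β}
    [IsMarkovKernel κ] {f : β → ℝ} (hf : StronglyMeasurable f) {C : ℝ} (hC : ∀ y, |f y| ≤ C) :
    Integrable (fun x => ∫ y, f y ∂(κ x)) μ :=
  .of_bound hf.integral_kernel.aestronglyMeasurable C
    (ae_of_all _ fun _ => abs_integral_le_of_forall_abs_le hC)

lemma ext_of_forall_integral_lipschitz_eq {Ω : Type*} [PseudoEMetricSpace Ω] [MeasurableSpace Ω]
    [BorelSpace Ω] {μ ν : Measure Ω} [IsFiniteMeasure μ] [IsFiniteMeasure ν]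
    (h : ∀ f : Ω → ℝ, (∃ C, ∀ x, |f x| ≤ C) → (∃ L, LipschitzWith L f) →
      ∫ x, f x ∂μ = ∫ x, f x ∂ν) :
    μ = ν := by
  have hclosed : ∀ F, IsClosed F → μ F = ν F := by
    intro F hF
    have hδ (n : ℕ) : (0 : ℝ) < 1 / (n + 1) := Nat.one_div_pos_of_nat
    have heq (n : ℕ) : ∫ x, (thickenedIndicator (hδ n) F x : ℝ) ∂μ
        = ∫ x, (thickenedIndicator (hδ n) F x : ℝ) ∂ν :=
      h _ ⟨1, fun x => by simpa using thickenedIndicator_le_one (hδ n) F x⟩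
        ⟨_, NNReal.isometry_coe.lipschitz.comp (lipschitzWith_thickenedIndicator (hδ n) F)⟩
    have hμ := tendsto_integral_thickenedIndicator_of_isClosed μ hF hδ
      tendsto_one_div_add_atTop_nhds_zero_nat
    simp_rw [heq] at hμ
    exact (measureReal_eq_measureReal_iff).1 <| tendsto_nhds_unique hμ
      (tendsto_integral_thickenedIndicator_of_isClosed ν hF hδ
        tendsto_one_div_add_atTop_nhds_zero_nat)
  refine ext_of_generate_finite _ ?_ isPiSystem_isClosed (fun F hF => hclosed F hF)
    (hclosed _ isClosed_univ)
  rw [BorelSpace.measurable_eq (α := Ω), borel_eq_generateFrom_isClosed]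

lemma tendsto_integral_zero_of_small_on_large_set {ι : Type*} {l : Filter ι}
    {m : ι → Measure α} [∀ i, IsProbabilityMeasure (m i)] {g : ι → α → ℝ}
    (hgm : ∀ i, AEStronglyMeasurable (g i) (m i)) {B : ℝ} (hgB : ∀ i x, |g i x| ≤ B)
    (hsmall : ∀ δ > 0, ∃ S, MeasurableSet S ∧ (∀ i, m i Sᶜ ≤ ENNReal.ofReal δ) ∧
      ∀ᶠ i in l, ∀ x ∈ S, |g i x| ≤ δ) :
    Tendsto (fun i => ∫ x, g i x ∂(m i)) l (𝓝 0) := by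
  have hbound : ∀ δ > 0, ∀ᶠ i in l, |∫ x, g i x ∂(m i)| ≤ (1 + |B|) * δ := by
    intro δ hδ
    obtain ⟨S, hS, hSc, hgS⟩ := hsmall δ hδ
    filter_upwards [hgS] with i hi
    have hint : Integrable (g i) (m i) := .of_bound (hgm i) B (ae_of_all _ (hgB i))
    have hin : ‖∫ x in S, g i x ∂(m i)‖ ≤ δ * (m i).real S :=
      norm_setIntegral_le_of_norm_le_const (f := g i) (measure_lt_top _ _) hi
    have hout : ‖∫ x in Sᶜ, g i x ∂(m i)‖ ≤ |B| * (m i).real Sᶜ :=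
      norm_setIntegral_le_of_norm_le_const (f := g i) (measure_lt_top _ _)
        fun x _ => (hgB i x).trans (le_abs_self B)
    have hSc' : (m i).real Sᶜ ≤ δ := ENNReal.toReal_le_of_le_ofReal hδ.le (hSc i)
    rw [← integral_add_compl hS hint]
    calc |∫ x in S, g i x ∂(m i) + ∫ x in Sᶜ, g i x ∂(m i)|
        ≤ |∫ x in S, g i x ∂(m i)| + |∫ x in Sᶜ, g i x ∂(m i)| := abs_add_le _ _
      _ ≤ δ * 1 + |B| * δ := by
        gcongr
        · exact hin.trans (by gcongr; exact measureReal_le_one)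
        · exact hout.trans (by gcongr)
      _ = (1 + |B|) * δ := by ring
  rw [Metric.tendsto_nhds]
  intro ε hε
  filter_upwards [hbound (ε / 2 / (1 + |B|)) (by positivity)] with i hi
  rw [Real.dist_0_eq_abs]
  calc |∫ x, g i x ∂(m i)| ≤ (1 + |B|) * (ε / 2 / (1 + |B|)) := hi
    _ = ε / 2 := by field_simp
    _ < ε := half_lt_self hε

end MeasureTheory

section extPsi

variable {α : Type*} [MeasurableSpace α] {ψ : ℝ → ℝ} {V : α → ℝ≥0∞}

lemma measurable_extPsi (hψ : Measurable ψ) : Measurable (extPsi ψ) :=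
  Measurable.ite (measurableSet_singleton ⊤) measurable_const
    (hψ.comp ENNReal.measurable_toReal).ennreal_ofReal

lemma ofReal_le_extPsi (hψ : Monotone ψ) {r : ℝ} {x : ℝ≥0∞} (hrx : ENNReal.ofReal r ≤ x) :
    ENNReal.ofReal (ψ r) ≤ extPsi ψ x := by
  by_cases hx : x = ⊤
  · simp [extPsi, hx]
  · rw [extPsi, if_neg hx]
    exact ENNReal.ofReal_le_ofReal (hψ ((ENNReal.ofReal_le_iff_le_toReal hx).1 hrx))

lemma mul_measure_lt_le_lintegral_extPsi (m : Measure α) (hV : Measurable V) (hψ : Monotone ψ)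
    (r : ℝ) :
    ENNReal.ofReal (ψ r) * m {u | ENNReal.ofReal r < V u} ≤ ∫⁻ u, extPsi ψ (V u) ∂m :=
  (mul_le_mul_right (measure_mono fun _ hu => ofReal_le_extPsi hψ (le_of_lt hu)) _).trans
    (mul_meas_ge_le_lintegral₀ ((measurable_extPsi hψ.measurable).comp hV).aemeasurable _)

lemma exists_measure_lt_le_of_lintegral_extPsi_le (hV : Measurable V) (hψ : Monotone ψ)
    (hψtop : Tendsto ψ atTop atTop) (c : ℝ) {δ : ℝ} (hδ : 0 < δ) :
    ∃ r : ℝ, ∀ m : Measure α, ∫⁻ u, extPsi ψ (V u) ∂m ≤ ENNReal.ofReal c →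
      m {u | ENNReal.ofReal r < V u} ≤ ENNReal.ofReal δ := by
  obtain ⟨r, hr⟩ := (hψtop.eventually_ge_atTop (max 1 (c / δ))).exists
  have hψr : 0 < ψ r := one_pos.trans_le ((le_max_left _ _).trans hr)
  refine ⟨r, fun m hm => ?_⟩
  calc m {u | ENNReal.ofReal r < V u} ≤ ENNReal.ofReal c / ENNReal.ofReal (ψ r) := by
        rw [ENNReal.le_div_iff_mul_le (.inl (ENNReal.ofReal_pos.2 hψr).ne') (.inl ofReal_ne_top),
          mul_comm]
        exact (mul_measure_lt_le_lintegral_extPsi m hV hψ r).trans hm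
    _ = ENNReal.ofReal (c / ψ r) := (ENNReal.ofReal_div_of_pos hψr).symm
    _ ≤ ENNReal.ofReal δ := by
        refine ENNReal.ofReal_le_ofReal ((div_le_iff₀ hψr).2 ?_)
        have := (div_le_iff₀ hδ).1 ((le_max_right _ _).trans hr)
        linarith

lemma tendsto_integral_zero_of_lintegral_extPsi_le {ι : Type*} {l : Filter ι}
    {m : ι → Measure α} [∀ i, IsProbabilityMeasure (m i)] (hV : Measurable V) (hψ : Monotone ψ)
    (hψtop : Tendsto ψ atTop atTop) {c : ℝ}
    (hmom : ∀ i, ∫⁻ u, extPsi ψ (V u) ∂(m i) ≤ ENNReal.ofReal c) {g : ι → α → ℝ}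
    (hgm : ∀ i, AEStronglyMeasurable (g i) (m i)) {B : ℝ} (hgB : ∀ i x, |g i x| ≤ B)
    (hg : ∀ R : ℝ≥0∞, R ≠ ⊤ → ∀ δ > 0, ∀ᶠ i in l, ∀ x, V x ≤ R → |g i x| ≤ δ) :
    Tendsto (fun i => ∫ x, g i x ∂(m i)) l (𝓝 0) := by
  refine tendsto_integral_zero_of_small_on_large_set hgm hgB fun δ hδ => ?_
  obtain ⟨r, hr⟩ := exists_measure_lt_le_of_lintegral_extPsi_le hV hψ hψtop c hδ
  refine ⟨{x | V x ≤ ENNReal.ofReal r}, hV measurableSet_Iic, fun i => ?_,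
    hg _ ofReal_ne_top δ hδ⟩
  simpa only [Set.compl_ofPred, not_le] using hr (m i) (hmom i)

end extPsi

theorem limit_invariant_measure_corollary_general
    {H : Type*} [NormedAddCommGroup H] [MeasurableSpace H] [BorelSpace H]
    (nV : H → ENNReal)
    (f : ℕ → H → ℝ) (hfc : ∀ n, Continuous (f n))
    (hflim : ∀ u, Tendsto (fun n => ENNReal.ofReal (f n u)) atTop (nhds (nV u)))
    (P : ProbabilityTheory.Kernel H H) [IsMarkovKernel P]
    (hFeller : ∀ φ : H → ℝ, Continuous φ → (∃ Cφ : ℝ, ∀ x, |φ x| ≤ Cφ) →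
      Continuous fun u => ∫ v, φ v ∂(P u))
    (Pe : ℝ → ProbabilityTheory.Kernel H H)
    (hPe : ∀ ε : ℝ, 0 < ε → IsMarkovKernel (Pe ε))
    (hconv : ∀ φ : H → ℝ, (∃ Cφ : ℝ, ∀ x, |φ x| ≤ Cφ) → (∃ Lip, LipschitzWith Lip φ) →
      ∀ R : ENNReal, R ≠ ⊤ → ∀ δ : ℝ, 0 < δ →
        ∀ᶠ ε in 𝓝[>] (0 : ℝ), ∀ u : H, nV u ≤ R →
          |(∫ v, φ v ∂(Pe ε u)) - ∫ v, φ v ∂(P u)| ≤ δ)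
    (ψ : ℝ → ℝ) (hψmono : Monotone ψ)
    (hψdiv : Tendsto ψ atTop atTop)
    (C₀ : ℝ)
    (με : ℝ → Measure H)
    (hμε : ∀ ε : ℝ, 0 < ε → IsProbabilityMeasure (με ε))
    (hmom : ∀ ε : ℝ, 0 < ε → (∫⁻ u, extPsi ψ (nV u) ∂(με ε)) ≤ ENNReal.ofReal C₀)
    (hinv : ∀ ε : ℝ, 0 < ε → (με ε).bind (fun u => Pe ε u) = με ε)
    (μ : Measure H) (hμprob : IsProbabilityMeasure μ)
    (εseq : ℕ → ℝ) (hεpos : ∀ n, 0 < εseq n) (hεlim : Tendsto εseq atTop (nhds 0))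
    (hweak : ∀ φ : H → ℝ, Continuous φ → (∃ Cφ : ℝ, ∀ x, |φ x| ≤ Cφ) →
      Tendsto (fun n => ∫ u, φ u ∂(με (εseq n))) atTop (nhds (∫ u, φ u ∂μ))) :
    μ.bind (fun u => P u) = μ := by
  have := hμprob
  have (n : ℕ) : IsProbabilityMeasure (με (εseq n)) := hμε _ (hεpos n)
  have (n : ℕ) : IsMarkovKernel (Pe (εseq n)) := hPe _ (hεpos n)
  have hnV : Measurable nV := measurable_of_tendsto_metrizable
    (fun n => (hfc n).measurable.ennreal_ofReal) (tendsto_pi_nhds.2 hflim)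
  have hεseq : Tendsto εseq atTop (𝓝[>] 0) :=
    tendsto_nhdsWithin_of_tendsto_nhds_of_eventually_within _ hεlim (.of_forall hεpos)
  refine ext_of_forall_integral_lipschitz_eq fun φ ⟨C, hC⟩ hφlip => ?_
  have hφc : Continuous φ := hφlip.choose_spec.continuous
  have hφm : StronglyMeasurable φ := hφc.measurable.stronglyMeasurable
  have hφint (ν : Measure H) [IsFiniteMeasure ν] : Integrable φ ν :=
    .of_bound hφm.aestronglyMeasurable C (ae_of_all _ hC)
  have hPφ (κ : Kernel H H) [IsMarkovKernel κ] (ν : Measure H) [IsFiniteMeasure ν] :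
      Integrable (fun u => ∫ v, φ v ∂(κ u)) ν := integrable_integral_kernel hφm hC
  have hgap : Tendsto (fun n => ∫ u, ((∫ v, φ v ∂(Pe (εseq n) u)) - ∫ v, φ v ∂(P u))
      ∂(με (εseq n))) atTop (𝓝 0) :=
    tendsto_integral_zero_of_lintegral_extPsi_le hnV hψmono hψdiv (fun n => hmom _ (hεpos n))
      (fun n => (hPφ _ _).aestronglyMeasurable.sub (hPφ _ _).aestronglyMeasurable)
      (fun n u => (abs_sub _ _).trans (add_le_add (abs_integral_le_of_forall_abs_le hC)
        (abs_integral_le_of_forall_abs_le hC)))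
      fun R hR δ hδ => hεseq.eventually (hconv φ ⟨C, hC⟩ hφlip R hR δ hδ)
  have hlim : Tendsto (fun n => ∫ u, ∫ v, φ v ∂(P u) ∂(με (εseq n))) atTop
      (𝓝 (∫ u, φ u ∂μ)) := by
    -- by invariance, `∫ φ dμ^ε - ∫ (P^ε φ - P φ) dμ^ε = ∫ P φ dμ^ε`
    refine sub_zero (∫ u, φ u ∂μ) ▸ ((hweak φ hφc ⟨C, hC⟩).sub hgap).congr fun n => ?_
    rw [integral_sub (hPφ _ _) (hPφ _ _), ← Measure.integral_bind_kernel, hinv _ (hεpos n)]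
    · ring
    · exact hinv _ (hεpos n) ▸ hφint _
  rw [Measure.integral_bind_kernel (hφint _)]
  exact tendsto_nhds_unique (hweak _ (hFeller φ hφc ⟨C, hC⟩)
    ⟨C, fun _ => abs_integral_le_of_forall_abs_le hC⟩) hlim

/-- Corollary A.2.  In the setting of the approximation Lemma A.1, if additionally each
`με ε` is an invariant probability measure for `Pe ε` (`με Pe = με`), then any weak-in-`H`
subsequential limit `μ` of the `με ε` is an invariant measure for `P`: `μ P = μ`. -/
theorem limit_invariant_measure_corollary
    {H : Type*} [NormedAddCommGroup H] [NormedSpace ℝ H] [CompleteSpace H]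
    [SecondCountableTopology H] [MeasurableSpace H] [BorelSpace H]
    (nV : H → ENNReal)
    (f : ℕ → H → ℝ) (hfc : ∀ n, Continuous (f n)) (hfnn : ∀ n u, 0 ≤ f n u)
    (hflim : ∀ u, Tendsto (fun n => ENNReal.ofReal (f n u)) atTop (nhds (nV u)))
    (hcpt : ∀ R : ENNReal, R ≠ ⊤ → IsCompact (closure {u | nV u ≤ R}))
    (P : ProbabilityTheory.Kernel H H) [IsMarkovKernel P]
    (hPV : ∀ u : H, nV u ≠ ⊤ → P u {v | nV v = ⊤} = 0)
    (hFeller : ∀ φ : H → ℝ, Continuous φ → (∃ Cφ : ℝ, ∀ x, |φ x| ≤ Cφ) →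
      Continuous fun u => ∫ v, φ v ∂(P u))
    (Pe : ℝ → ProbabilityTheory.Kernel H H)
    (hPe : ∀ ε : ℝ, 0 < ε → IsMarkovKernel (Pe ε))
    (hPeV : ∀ ε : ℝ, 0 < ε → ∀ u : H, nV u ≠ ⊤ → Pe ε u {v | nV v = ⊤} = 0)
    (hconv : ∀ φ : H → ℝ, (∃ Cφ : ℝ, ∀ x, |φ x| ≤ Cφ) → (∃ Lip, LipschitzWith Lip φ) →
      ∀ R : ENNReal, R ≠ ⊤ → ∀ δ : ℝ, 0 < δ →
        ∀ᶠ ε in 𝓝[>] (0 : ℝ), ∀ u : H, nV u ≤ R →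
          |(∫ v, φ v ∂(Pe ε u)) - ∫ v, φ v ∂(P u)| ≤ δ)
    (ψ : ℝ → ℝ) (hψmono : Monotone ψ) (hψcont : Continuous ψ)
    (hψnn : ∀ r, 0 ≤ ψ r) (hψdiv : Tendsto ψ atTop atTop)
    (C₀ : ℝ)
    (με : ℝ → Measure H)
    (hμε : ∀ ε : ℝ, 0 < ε → IsProbabilityMeasure (με ε))
    (hμεV : ∀ ε : ℝ, 0 < ε → με ε {u | nV u = ⊤} = 0)
    (hmom : ∀ ε : ℝ, 0 < ε → (∫⁻ u, extPsi ψ (nV u) ∂(με ε)) ≤ ENNReal.ofReal C₀)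
    (hinv : ∀ ε : ℝ, 0 < ε → (με ε).bind (fun u => Pe ε u) = με ε)
    (μ : Measure H) (hμprob : IsProbabilityMeasure μ)
    (εseq : ℕ → ℝ) (hεpos : ∀ n, 0 < εseq n) (hεlim : Tendsto εseq atTop (nhds 0))
    (hweak : ∀ φ : H → ℝ, Continuous φ → (∃ Cφ : ℝ, ∀ x, |φ x| ≤ Cφ) →
      Tendsto (fun n => ∫ u, φ u ∂(με (εseq n))) atTop (nhds (∫ u, φ u ∂μ))) :
    μ.bind (fun u => P u) = μ :=
  limit_invariant_measure_corollary_general nV f hfc hflim P hFeller Pe hPe hconv ψ hψmono hψdiv C₀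
    με hμε hmom hinv μ hμprob εseq hεpos hεlim hweak
end

section
/- Let ε, α, λ > 0 with ε ≤ α/2, and suppose nonnegative absolutely continuous functions t ↦ |r(t)|², ‖u(t)‖² satisfy d/dt(|r|² + ‖u‖²) + (α|r|² + 2ε‖u‖²) ≤ (εα/√λ)‖u‖·|r| + B|r| + S, where B, S ≥ 0 are constants. If additionally ε ≤ min{λ/α, α/2, √(λ/2)}, then d/dt(|r|² + ‖u‖²) + ε(|r|² + ‖u‖²) ≤ B²/α + S. -/
/-- Energy-balance absorption for the damped Sine-Gordon equation: with `r = |r(t)|` and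
`u = ‖u(t)‖` nonnegative, Poincaré constant `λ > 0`, constants `B = 2|β||𝒟|^{1/2} ≥ 0`,
`S = |σ|² ≥ 0`, and `0 < ε ≤ min {λ/α, α/2, √(λ/2)}`, a derivative value `D` satisfying
`D + (α r² + 2 ε u²) ≤ (ε α / √λ) u r + B r + S` also satisfies
`D + ε (r² + u²) ≤ B²/α + S`. -/
theorem sine_gordon_energy_absorption
    (ε α lam B S : ℝ) (hε : 0 < ε) (hα : 0 < α) (hlam : 0 < lam)
    (hB : 0 ≤ B) (hS : 0 ≤ S)
    (hε1 : ε ≤ lam / α) (hε2 : ε ≤ α / 2) (hε3 : ε ≤ Real.sqrt (lam / 2))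
    (r u D : ℝ) (hr : 0 ≤ r) (hu : 0 ≤ u)
    (hineq : D + (α * r ^ 2 + 2 * ε * u ^ 2) ≤
      ε * α / Real.sqrt lam * u * r + B * r + S) :
    D + ε * (r ^ 2 + u ^ 2) ≤ B ^ 2 / α + S := by
  set s := Real.sqrt lam with hs
  have hs0 : 0 < s := Real.sqrt_pos.mpr hlam
  have hs2 : s ^ 2 = lam := Real.sq_sqrt hlam.le
  have hεα : ε * α ≤ lam := by
    have := (le_div_iff₀ hα).mp hε1; linarith
  set c := α / s with hc
  have hc0 : 0 < c := by positivity
  have hc2 : c ^ 2 = α ^ 2 / lam := by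
    rw [hc, div_pow, hs2]
  have heq : ε * α / s = ε * c := by rw [hc, mul_div_assoc]
  -- AM-GM: ε c u r ≤ ε u² + ε c²/4 r²
  have h1 : ε * c * u * r ≤ ε * u ^ 2 + ε * c ^ 2 / 4 * r ^ 2 := by
    nlinarith [mul_nonneg hε.le (sq_nonneg (u - c * r / 2))]
  have h3 : ε * c ^ 2 / 4 * r ^ 2 ≤ α / 4 * r ^ 2 := by
    rw [hc2]
    have : ε * (α ^ 2 / lam) / 4 ≤ α / 4 := by
      rw [div_le_div_iff₀ (by norm_num) (by norm_num)]
      have hle : ε * (α ^ 2 / lam) ≤ α := by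
        rw [mul_div_assoc', div_le_iff₀ hlam]; nlinarith
      linarith
    nlinarith [sq_nonneg r]
  have hd2 : α * (B ^ 2 / α) = B ^ 2 := by field_simp
  have h2 : B * r ≤ α / 4 * r ^ 2 + B ^ 2 / α := by
    nlinarith [sq_nonneg (α * r / 2 - B), hd2, hα]
  rw [heq] at hineq
  have h4 : ε * r ^ 2 ≤ α / 2 * r ^ 2 :=
    mul_le_mul_of_nonneg_right hε2 (sq_nonneg r)
  linarith [h1, h2, h3, h4, hineq]
end
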